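/- arXiv:math/0612368 — 3 statements merged into one kernel-verified Lean document; each statement's English description precedes it below -/
import Mathlib

section
/- In the Euclidean setting: if r + n < 0 and s + n < 0 (so in particular r + s + n < 0), then there exists a constant C such that for all x ∈ ℝ^n, ∫_{ℝ^n} (1+|y|)^r (1+|x−y|)^s dy ≤ C (1+|x|)^{max(r,s)}. -/
open MeasureTheory

/-- Pointwise key inequality: if `max a b ≥ m ≥ 1`, `a,b ≥ 1`, `r,s ≤ 0`, then
`a^r * b^s ≤ m^(max r s) * (a^r + b^s)`. -/
lemma pointwise_key {a b m r s : ℝ} (ha : 1 ≤ a) (hb : 1 ≤ b) (hm : 1 ≤ m)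
    (hab : m ≤ max a b) (hr : r ≤ 0) (hs : s ≤ 0) :
    a ^ r * b ^ s ≤ m ^ (max r s) * (a ^ r + b ^ s) := by
  have hm0 : (0 : ℝ) < m := by linarith
  have ha0 : (0 : ℝ) < a := by linarith
  have hb0 : (0 : ℝ) < b := by linarith
  have har : (0 : ℝ) ≤ a ^ r := (Real.rpow_pos_of_pos ha0 r).le
  have hbs : (0 : ℝ) ≤ b ^ s := (Real.rpow_pos_of_pos hb0 s).le
  rcases le_max_iff.mp hab with h | h
  · -- m ≤ a
    have h1 : a ^ r ≤ m ^ r := Real.rpow_le_rpow_of_nonpos hm0 h hr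
    have h2 : m ^ r ≤ m ^ (max r s) :=
      Real.rpow_le_rpow_of_exponent_le hm (le_max_left r s)
    calc a ^ r * b ^ s ≤ m ^ (max r s) * b ^ s := by
          apply mul_le_mul_of_nonneg_right (h1.trans h2) hbs
      _ ≤ m ^ (max r s) * (a ^ r + b ^ s) := by
          apply mul_le_mul_of_nonneg_left (by linarith) (Real.rpow_pos_of_pos hm0 _).le
  · -- m ≤ b
    have h1 : b ^ s ≤ m ^ s := Real.rpow_le_rpow_of_nonpos hm0 h hs
    have h2 : m ^ s ≤ m ^ (max r s) :=
      Real.rpow_le_rpow_of_exponent_le hm (le_max_right r s)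
    calc a ^ r * b ^ s ≤ a ^ r * m ^ (max r s) :=
          mul_le_mul_of_nonneg_left (h1.trans h2) har
      _ = m ^ (max r s) * a ^ r := mul_comm _ _
      _ ≤ m ^ (max r s) * (a ^ r + b ^ s) := by
          apply mul_le_mul_of_nonneg_left (by linarith) (Real.rpow_pos_of_pos hm0 _).le

/-- If `r + n < 0` and `s + n < 0`, then
`∫ (1+|y|)^r (1+|x−y|)^s dy ≤ C (1+|x|)^{max(r,s)}`. -/
theorem convolution_estimate_max_case (n : ℕ) (r s : ℝ)
    (hr : r + n < 0) (hs : s + n < 0) :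
    ∃ C : ℝ, ∀ x : EuclideanSpace ℝ (Fin n),
      (∫ y : EuclideanSpace ℝ (Fin n), (1 + ‖y‖) ^ r * (1 + ‖x - y‖) ^ s) ≤
        C * (1 + ‖x‖) ^ (max r s) := by
  set E := EuclideanSpace ℝ (Fin n)
  have hn : (Module.finrank ℝ E : ℝ) = n := by
    simp [E]
  have hIr : Integrable (fun y : E => (1 + ‖y‖) ^ r) := by
    have := integrable_one_add_norm (E := E) (μ := volume) (r := -r) (by rw [hn]; linarith)
    simpa using this
  have hIs : Integrable (fun y : E => (1 + ‖y‖) ^ s) := by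
    have := integrable_one_add_norm (E := E) (μ := volume) (r := -s) (by rw [hn]; linarith)
    simpa using this
  set A : ℝ := ∫ y : E, (1 + ‖y‖) ^ r with hA
  set B : ℝ := ∫ y : E, (1 + ‖y‖) ^ s with hB
  have hA0 : 0 ≤ A := integral_nonneg fun y => (Real.rpow_pos_of_pos (by positivity) r).le
  have hB0 : 0 ≤ B := integral_nonneg fun y => (Real.rpow_pos_of_pos (by positivity) s).le
  refine ⟨2 ^ (-(max r s)) * (A + B), fun x => ?_⟩
  have hx0 : (0 : ℝ) < 1 + ‖x‖ := by positivity
  set m : ℝ := 1 + ‖x‖ / 2 with hmdef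
  have hm1 : 1 ≤ m := by have := norm_nonneg x; simp [hmdef]; linarith
  -- integrability of translated s-factor
  have hIsx : Integrable (fun y : E => (1 + ‖x - y‖) ^ s) := hIs.comp_sub_left x
  have hIg : Integrable (fun y : E =>
      m ^ (max r s) * ((1 + ‖y‖) ^ r + (1 + ‖x - y‖) ^ s)) :=
    ((hIr.add hIsx).const_mul _)
  have hmono : ∀ y : E, (1 + ‖y‖) ^ r * (1 + ‖x - y‖) ^ s ≤
      m ^ (max r s) * ((1 + ‖y‖) ^ r + (1 + ‖x - y‖) ^ s) := by
    intro y
    apply pointwise_key (by have := norm_nonneg y; linarith)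
      (by have := norm_nonneg (x - y); linarith) hm1 ?_ (by linarith [Nat.cast_nonneg (α := ℝ) n])
      (by linarith [Nat.cast_nonneg (α := ℝ) n])
    -- m ≤ max (1 + ‖y‖) (1 + ‖x - y‖)
    have htri : ‖x‖ ≤ ‖y‖ + ‖x - y‖ := by
      have := norm_sub_le (x - y) (-y)
      calc ‖x‖ = ‖(x - y) - (-y)‖ := by congr 1; abel
        _ ≤ ‖x - y‖ + ‖-y‖ := norm_sub_le _ _
        _ = ‖y‖ + ‖x - y‖ := by rw [norm_neg]; ring
    rcases le_total ‖y‖ ‖x - y‖ with h | h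
    · have : ‖x‖ / 2 ≤ ‖x - y‖ := by linarith
      exact le_max_of_le_right (by simp [hmdef]; linarith)
    · have : ‖x‖ / 2 ≤ ‖y‖ := by linarith
      exact le_max_of_le_left (by simp [hmdef]; linarith)
  have hint : (∫ y : E, (1 + ‖y‖) ^ r * (1 + ‖x - y‖) ^ s) ≤
      m ^ (max r s) * (A + B) := by
    have h1 := integral_mono_of_nonneg
      (Filter.Eventually.of_forall fun y =>
        (mul_nonneg (Real.rpow_pos_of_pos (by positivity) r).le
          (Real.rpow_pos_of_pos (by positivity) s).le))
      hIg (Filter.Eventually.of_forall hmono)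
    calc (∫ y : E, (1 + ‖y‖) ^ r * (1 + ‖x - y‖) ^ s)
        ≤ ∫ y : E, m ^ (max r s) * ((1 + ‖y‖) ^ r + (1 + ‖x - y‖) ^ s) := h1
      _ = m ^ (max r s) * ((∫ y : E, (1 + ‖y‖) ^ r) + ∫ y : E, (1 + ‖x - y‖) ^ s) := by
          rw [integral_const_mul, integral_add hIr hIsx]
      _ = m ^ (max r s) * (A + B) := by
          rw [integral_sub_left_eq_self (fun y : E => (1 + ‖y‖) ^ s) volume x]
  refine hint.trans ?_
  -- m ^ max r s ≤ 2^(-max) * (1+‖x‖)^max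
  have hmax0 : max r s ≤ 0 := by
    have : (0:ℝ) ≤ n := Nat.cast_nonneg n
    rw [max_le_iff]; constructor <;> linarith
  have hhalf : (1 + ‖x‖) / 2 ≤ m := by
    have := norm_nonneg x; simp [hmdef]; linarith
  have hkey : m ^ (max r s) ≤ 2 ^ (-(max r s)) * (1 + ‖x‖) ^ (max r s) := by
    have h1 : m ^ (max r s) ≤ ((1 + ‖x‖) / 2) ^ (max r s) :=
      Real.rpow_le_rpow_of_nonpos (by positivity) hhalf hmax0
    have h2 : ((1 + ‖x‖) / 2) ^ (max r s) = (1 + ‖x‖) ^ (max r s) / 2 ^ (max r s) :=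
      Real.div_rpow hx0.le (by norm_num : (0:ℝ) ≤ 2) _
    rw [h2] at h1
    calc m ^ (max r s) ≤ (1 + ‖x‖) ^ (max r s) / 2 ^ (max r s) := h1
      _ = 2 ^ (-(max r s)) * (1 + ‖x‖) ^ (max r s) := by
          rw [Real.rpow_neg (by norm_num)]; field_simp
  calc m ^ (max r s) * (A + B)
      ≤ (2 ^ (-(max r s)) * (1 + ‖x‖) ^ (max r s)) * (A + B) :=
        mul_le_mul_of_nonneg_right hkey (by linarith)
    _ = 2 ^ (-(max r s)) * (A + B) * (1 + ‖x‖) ^ (max r s) := by ring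
end

section
/- Let Γ ≥ 1 and Q ≥ 1. Define Φ_Γ(x,a) = a^Γ / (a + |x|)^{Q+Γ} for x ∈ ℝ^Q, a > 0. Then the function (x,a) ↦ (1/a) Φ_Γ(x,a) belongs to weak-L¹ of the measure dx da on ℝ^Q × (0,∞): there is a constant C such that for every α > 0, the set {(x,a) : (1/a)Φ_Γ(x,a) > α} has (dx da)-measure at most C/α. -/
open MeasureTheory

/-- The function `(x,a) ↦ (1/a) · a^Γ/(a+|x|)^{Q+Γ}` is in weak-L¹ of `dx da`
on `ℝ^Q × (0,∞)`. -/
theorem weakL1_inv_a_PhiGamma (Q : ℕ) (hQ : 1 ≤ Q) (Γ : ℝ) (hΓ : 1 ≤ Γ) :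
    ∃ C : ℝ, ∀ α : ℝ, 0 < α →
      volume {p : EuclideanSpace ℝ (Fin Q) × ℝ |
          0 < p.2 ∧ α < (1 / p.2) * (p.2 ^ Γ / (p.2 + ‖p.1‖) ^ ((Q : ℝ) + Γ))} ≤
        ENNReal.ofReal (C / α) := by
  set V := volume (Metric.ball (0 : EuclideanSpace ℝ (Fin Q)) 1) with hVdef
  have hVlt : V < ⊤ := measure_ball_lt_top
  haveI : Nonempty (Fin Q) := ⟨⟨0, hQ⟩⟩
  refine ⟨V.toReal, fun α hα => ?_⟩
  have hc : (0:ℝ) < (Q:ℝ) + 1 := by positivity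
  set r : ℝ := (1/α) ^ ((1:ℝ)/((Q:ℝ)+1)) with hrdef
  have hrpos : 0 < r := Real.rpow_pos_of_pos (by positivity) _
  have hsub : {p : EuclideanSpace ℝ (Fin Q) × ℝ |
      0 < p.2 ∧ α < (1 / p.2) * (p.2 ^ Γ / (p.2 + ‖p.1‖) ^ ((Q : ℝ) + Γ))} ⊆
      (Metric.ball (0 : EuclideanSpace ℝ (Fin Q)) r) ×ˢ (Set.Ioo 0 r) := by
    rintro ⟨x, a⟩ ⟨ha, h⟩
    have hx0 : (0:ℝ) ≤ ‖x‖ := norm_nonneg x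
    have ha' : (0:ℝ) < a := ha
    have hs : (0:ℝ) < a + ‖x‖ := by linarith
    have hax : a ≤ a + ‖x‖ := by linarith
    -- rewrite the left side
    have h1 : (1 / a) * (a ^ Γ / (a + ‖x‖) ^ ((Q : ℝ) + Γ))
        = a ^ (Γ - 1) / (a + ‖x‖) ^ ((Q : ℝ) + Γ) := by
      have : a ^ Γ = a ^ (Γ - 1) * a := by
        rw [← Real.rpow_add_one (ne_of_gt ha)]; ring_nf
      rw [this]; field_simp
    rw [h1] at h
    have h2 : a ^ (Γ - 1) ≤ (a + ‖x‖) ^ (Γ - 1) :=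
      Real.rpow_le_rpow (le_of_lt ha) hax (by linarith)
    have hD : (0:ℝ) < (a + ‖x‖) ^ ((Q : ℝ) + Γ) := Real.rpow_pos_of_pos hs _
    have h3 : α < (a + ‖x‖) ^ (Γ - 1) / (a + ‖x‖) ^ ((Q : ℝ) + Γ) :=
      lt_of_lt_of_le h (by gcongr)
    have h4 : (a + ‖x‖) ^ (Γ - 1) / (a + ‖x‖) ^ ((Q : ℝ) + Γ)
        = ((a + ‖x‖) ^ ((Q:ℝ)+1))⁻¹ := by
      rw [← Real.rpow_sub hs, ← Real.rpow_neg (le_of_lt hs)]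
      ring_nf
    rw [h4] at h3
    have hpow : (0:ℝ) < (a + ‖x‖) ^ ((Q:ℝ)+1) := Real.rpow_pos_of_pos hs _
    have h5 : (a + ‖x‖) ^ ((Q:ℝ)+1) < 1/α := by
      rw [lt_div_iff₀ hα]
      have := (mul_lt_mul_of_pos_left h3 hpow)
      rw [mul_inv_cancel₀ (ne_of_gt hpow)] at this
      linarith
    have h6 : a + ‖x‖ < r := by
      have := Real.rpow_lt_rpow (le_of_lt hpow) h5 (by positivity : (0:ℝ) < 1/((Q:ℝ)+1))
      rwa [← Real.rpow_mul (le_of_lt hs),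
        show ((Q:ℝ)+1) * (1/((Q:ℝ)+1)) = 1 by field_simp, Real.rpow_one] at this
    constructor
    · simp only [Metric.mem_ball, dist_zero_right]
      have : ‖x‖ ≤ a + ‖x‖ := by linarith
      linarith
    · exact ⟨ha, lt_of_le_of_lt hax h6⟩
  calc volume {p : EuclideanSpace ℝ (Fin Q) × ℝ |
          0 < p.2 ∧ α < (1 / p.2) * (p.2 ^ Γ / (p.2 + ‖p.1‖) ^ ((Q : ℝ) + Γ))}
      ≤ volume ((Metric.ball (0 : EuclideanSpace ℝ (Fin Q)) r) ×ˢ (Set.Ioo 0 r)) :=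
        measure_mono hsub
    _ = volume (Metric.ball (0 : EuclideanSpace ℝ (Fin Q)) r) * volume (Set.Ioo (0:ℝ) r) := by
        rw [MeasureTheory.Measure.volume_eq_prod, Measure.prod_prod]
    _ = (ENNReal.ofReal (r ^ Q) * V) * ENNReal.ofReal r := by
        rw [Real.volume_Ioo, Measure.addHaar_ball _ _ (le_of_lt hrpos), hVdef]
        simp [finrank_euclideanSpace_fin]
    _ = V * ENNReal.ofReal (r ^ Q * r) := by
        rw [ENNReal.ofReal_mul (by positivity)]; ring
    _ = ENNReal.ofReal (V.toReal / α) := by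
        have hr1 : r ^ Q * r = 1/α := by
          have : r ^ Q * r = r ^ ((Q:ℝ)+1) := by
            rw [← Real.rpow_natCast r Q, ← Real.rpow_add_one (ne_of_gt hrpos)]
          rw [this, hrdef, ← Real.rpow_mul (by positivity),
            show (1/((Q:ℝ)+1)) * ((Q:ℝ)+1) = 1 by field_simp, Real.rpow_one]
        rw [hr1, one_div, ENNReal.ofReal_inv_of_pos hα, ENNReal.ofReal_div_of_pos hα,
          ENNReal.ofReal_toReal (ne_of_lt hVlt), div_eq_mul_inv]
end

section
/- Let Γ ≥ 1 and let μ be a positive measure on ℝ^Q with ∫ (1+|ξ|)^{-(Q+Γ)} dμ(ξ) < ∞. Define I(x,a) = (a^{Γ-1}/(1+a+|x|)^{Q+Γ}) ∫_{|ξ| ≤ |x|/2} (a + |x − ξ|)^{-(Q+Γ)} dμ(ξ) on the region E = {(x,a) : |x| ≥ 1 or a ≥ 1}. Then I(x,a) ≤ C (1/a) · a^Γ/(1+a+|x|)^{Q+Γ} on E for a constant C depending only on μ, Q, Γ; in particular, I restricted to E belongs to weak-L¹(dx da). -/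
/-!
On `E`, every `ξ` with `‖ξ‖ ≤ ‖x‖ / 2` satisfies `1 + ‖ξ‖ ≤ 4 (a + ‖x - ξ‖)`, so the integral in
`I(x,a)` is at most `4^(Q+Γ) ∫ (1+|ξ|)^{-(Q+Γ)} dμ`, a finite constant `C`. Since `Γ ≥ 1`, the
resulting majorant `C a^(Γ-1)/(1+a+|x|)^(Q+Γ)` is at most `C (1+a+|x|)^{-(Q+1)}`, whose superlevel
set at height `α` lies in the box `closedBall 0 R × (0, R]` with `R^(Q+1) = C/α`, of measure
comparable to `C/α`.
-/

open MeasureTheory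

noncomputable section

/-- The term `I(x,a)` in the proof of the global weak-L¹ estimate. -/
def termI (Q : ℕ) (Γ : ℝ) (μ : Measure (EuclideanSpace ℝ (Fin Q)))
    (x : EuclideanSpace ℝ (Fin Q)) (a : ℝ) : ℝ :=
  (a ^ (Γ - 1) / (1 + a + ‖x‖) ^ ((Q : ℝ) + Γ)) *
    (∫⁻ ξ in {ξ : EuclideanSpace ℝ (Fin Q) | ‖ξ‖ ≤ ‖x‖ / 2},
      ENNReal.ofReal ((a + ‖x - ξ‖) ^ (-((Q : ℝ) + Γ))) ∂μ).toReal

open Metric Module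

section Geometry

variable {E : Type*} [SeminormedAddCommGroup E] {x ξ : E} {a : ℝ}

lemma one_add_norm_le_four_mul_add_norm_sub (ha : 0 ≤ a) (hxa : 1 ≤ ‖x‖ ∨ 1 ≤ a)
    (hξ : ‖ξ‖ ≤ ‖x‖ / 2) : 1 + ‖ξ‖ ≤ 4 * (a + ‖x - ξ‖) := by
  have hxξ : ‖x‖ / 2 ≤ ‖x - ξ‖ := by linarith [norm_sub_norm_le x ξ]
  rcases hxa with h | h <;> linarith [norm_nonneg ξ]

lemma add_norm_sub_rpow_neg_le (ha : 0 ≤ a) (hxa : 1 ≤ ‖x‖ ∨ 1 ≤ a) (hξ : ‖ξ‖ ≤ ‖x‖ / 2)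
    {s : ℝ} (hs : 0 ≤ s) : (a + ‖x - ξ‖) ^ (-s) ≤ 4 ^ s * (1 + ‖ξ‖) ^ (-s) := by
  have hle : (1 + ‖ξ‖) / 4 ≤ a + ‖x - ξ‖ := by
    linarith [one_add_norm_le_four_mul_add_norm_sub ha hxa hξ]
  calc (a + ‖x - ξ‖) ^ (-s) ≤ ((1 + ‖ξ‖) / 4) ^ (-s) :=
        Real.rpow_le_rpow_of_nonpos (by positivity) hle (neg_nonpos.mpr hs)
    _ = 4 ^ s * (1 + ‖ξ‖) ^ (-s) := by
        rw [Real.div_rpow (by positivity) (by norm_num), Real.rpow_neg (by norm_num : (0 : ℝ) ≤ 4),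
          div_inv_eq_mul, mul_comm]

end Geometry

lemma setLIntegral_add_norm_sub_rpow_neg_le {E : Type*} [NormedAddCommGroup E] [MeasurableSpace E]
    [OpensMeasurableSpace E] (μ : Measure E) {x : E} {a s : ℝ} (ha : 0 ≤ a)
    (hxa : 1 ≤ ‖x‖ ∨ 1 ≤ a) (hs : 0 ≤ s) :
    ∫⁻ ξ in {ξ | ‖ξ‖ ≤ ‖x‖ / 2}, ENNReal.ofReal ((a + ‖x - ξ‖) ^ (-s)) ∂μ ≤
      ENNReal.ofReal (4 ^ s) * ∫⁻ ξ, ENNReal.ofReal ((1 + ‖ξ‖) ^ (-s)) ∂μ := by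
  have hmeas : Measurable fun ξ : E => ENNReal.ofReal ((1 + ‖ξ‖) ^ (-s)) :=
    (measurable_const.add measurable_norm).pow_const _ |>.ennreal_ofReal
  calc ∫⁻ ξ in {ξ | ‖ξ‖ ≤ ‖x‖ / 2}, ENNReal.ofReal ((a + ‖x - ξ‖) ^ (-s)) ∂μ
      ≤ ∫⁻ ξ in {ξ | ‖ξ‖ ≤ ‖x‖ / 2},
          ENNReal.ofReal (4 ^ s) * ENNReal.ofReal ((1 + ‖ξ‖) ^ (-s)) ∂μ := by
        refine setLIntegral_mono (hmeas.const_mul _) fun ξ hξ => ?_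
        rw [← ENNReal.ofReal_mul (by positivity)]
        exact ENNReal.ofReal_le_ofReal (add_norm_sub_rpow_neg_le ha hxa hξ hs)
    _ = ENNReal.ofReal (4 ^ s) *
          ∫⁻ ξ in {ξ | ‖ξ‖ ≤ ‖x‖ / 2}, ENNReal.ofReal ((1 + ‖ξ‖) ^ (-s)) ∂μ :=
        lintegral_const_mul' _ _ ENNReal.ofReal_ne_top
    _ ≤ ENNReal.ofReal (4 ^ s) * ∫⁻ ξ, ENNReal.ofReal ((1 + ‖ξ‖) ^ (-s)) ∂μ := by
        gcongr
        exact Measure.restrict_le_self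

lemma termI_le {Q : ℕ} {Γ : ℝ} (hQΓ : 0 ≤ (Q : ℝ) + Γ) {μ : Measure (EuclideanSpace ℝ (Fin Q))}
    (hμ : ∫⁻ ξ, ENNReal.ofReal ((1 + ‖ξ‖) ^ (-((Q : ℝ) + Γ))) ∂μ < ⊤)
    {x : EuclideanSpace ℝ (Fin Q)} {a : ℝ} (ha : 0 < a) (hxa : 1 ≤ ‖x‖ ∨ 1 ≤ a) :
    termI Q Γ μ x a ≤
      (4 ^ ((Q : ℝ) + Γ) * (∫⁻ ξ, ENNReal.ofReal ((1 + ‖ξ‖) ^ (-((Q : ℝ) + Γ))) ∂μ).toReal) *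
        ((1 / a) * (a ^ Γ / (1 + a + ‖x‖) ^ ((Q : ℝ) + Γ))) := by
  have hint := ENNReal.toReal_mono (ENNReal.mul_ne_top ENNReal.ofReal_ne_top hμ.ne)
    (setLIntegral_add_norm_sub_rpow_neg_le μ ha.le hxa hQΓ)
  rw [ENNReal.toReal_mul, ENNReal.toReal_ofReal (by positivity)] at hint
  have hfactor : a ^ (Γ - 1) / (1 + a + ‖x‖) ^ ((Q : ℝ) + Γ) =
      (1 / a) * (a ^ Γ / (1 + a + ‖x‖) ^ ((Q : ℝ) + Γ)) := by
    rw [Real.rpow_sub_one ha.ne']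
    ring
  unfold termI
  rw [hfactor, mul_comm]
  gcongr

lemma one_div_mul_rpow_div_rpow_le {a t s Γ : ℝ} (ha : 0 < a) (hat : a ≤ t) (hΓ : 1 ≤ Γ) :
    (1 / a) * (a ^ Γ / t ^ (s + Γ)) ≤ t ^ (-(s + 1)) := by
  have ht : 0 < t := ha.trans_le hat
  calc (1 / a) * (a ^ Γ / t ^ (s + Γ)) = a ^ (Γ - 1) / t ^ (s + Γ) := by
        rw [Real.rpow_sub_one ha.ne']
        ring
    _ ≤ t ^ (Γ - 1) / t ^ (s + Γ) := by gcongr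
    _ = t ^ (-(s + 1)) := by
        rw [← Real.rpow_sub ht]
        ring_nf

lemma lt_rpow_inv_of_lt_mul_rpow_neg {t C α k : ℝ} (ht : 0 ≤ t) (hα : 0 < α) (hk : 0 < k)
    (h : α < C * t ^ (-k)) : t < (C / α) ^ k⁻¹ := by
  have htk : 0 < t ^ k := by
    rcases ht.eq_or_lt with rfl | ht
    · simp [Real.zero_rpow (neg_ne_zero.mpr hk.ne'), hα.not_gt] at h
    · positivity
  rw [Real.rpow_neg ht, ← div_eq_mul_inv, lt_div_iff₀ htk] at h
  have hC : 0 < C := by nlinarith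
  rw [Real.lt_rpow_inv_iff_of_pos ht (by positivity) hk, lt_div_iff₀ hα]
  linarith

lemma measure_superlevel_rpow_neg_le {E : Type*} [NormedAddCommGroup E] [NormedSpace ℝ E]
    [FiniteDimensional ℝ E] [MeasurableSpace E] [BorelSpace E] (μ : Measure E)
    [μ.IsAddHaarMeasure] {C α : ℝ} (hC : 0 ≤ C) (hα : 0 < α) :
    (μ.prod volume) {p : E × ℝ | 0 < p.2 ∧
        α < C * (1 + p.2 + ‖p.1‖) ^ (-((finrank ℝ E : ℝ) + 1))} ≤
      ENNReal.ofReal ((μ (ball 0 1)).toReal * C / α) := by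
  set d := finrank ℝ E
  set R := (C / α) ^ ((d : ℝ) + 1)⁻¹
  have hsub : {p : E × ℝ | 0 < p.2 ∧ α < C * (1 + p.2 + ‖p.1‖) ^ (-((d : ℝ) + 1))} ⊆
      closedBall 0 R ×ˢ Set.Ioc 0 R := by
    rintro ⟨x, a⟩ ⟨ha, hlt⟩
    have hR := lt_rpow_inv_of_lt_mul_rpow_neg (by positivity) hα (by positivity) hlt
    exact ⟨mem_closedBall_zero_iff.mpr (by linarith), ha, by linarith [norm_nonneg x]⟩
  have hR0 : 0 ≤ R := by positivity
  have hRpow : R ^ d * R = C / α := by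
    rw [← pow_succ, ← Real.rpow_natCast, Nat.cast_succ,
      Real.rpow_inv_rpow (by positivity) (by positivity)]
  calc (μ.prod volume) {p : E × ℝ | 0 < p.2 ∧ α < C * (1 + p.2 + ‖p.1‖) ^ (-((d : ℝ) + 1))}
      ≤ (μ.prod volume) (closedBall 0 R ×ˢ Set.Ioc 0 R) := measure_mono hsub
    _ = ENNReal.ofReal (R ^ d) * μ (ball 0 1) * ENNReal.ofReal R := by
        rw [Measure.prod_prod, Measure.addHaar_closedBall μ _ hR0, Real.volume_Ioc, sub_zero]
    _ = ENNReal.ofReal ((μ (ball 0 1)).toReal * C / α) := by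
        rw [mul_div_assoc, ← hRpow, ENNReal.ofReal_mul ENNReal.toReal_nonneg,
          ENNReal.ofReal_toReal measure_ball_lt_top.ne, ENNReal.ofReal_mul (by positivity)]
        ring

theorem termI_estimate_general (Q : ℕ) (Γ : ℝ) (hΓ : 1 ≤ Γ)
    (μ : Measure (EuclideanSpace ℝ (Fin Q)))
    (hμ : ∫⁻ ξ, ENNReal.ofReal ((1 + ‖ξ‖) ^ (-((Q : ℝ) + Γ))) ∂μ < ⊤) :
    (∃ C : ℝ, ∀ (x : EuclideanSpace ℝ (Fin Q)) (a : ℝ), 0 < a →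
        (1 ≤ ‖x‖ ∨ 1 ≤ a) →
        termI Q Γ μ x a ≤
          C * ((1 / a) * (a ^ Γ / (1 + a + ‖x‖) ^ ((Q : ℝ) + Γ)))) ∧
    (∃ C' : ℝ, ∀ α : ℝ, 0 < α →
        volume {p : EuclideanSpace ℝ (Fin Q) × ℝ |
            0 < p.2 ∧ (1 ≤ ‖p.1‖ ∨ 1 ≤ p.2) ∧ α < termI Q Γ μ p.1 p.2} ≤
          ENNReal.ofReal (C' / α)) := by
  set C := 4 ^ ((Q : ℝ) + Γ) * (∫⁻ ξ, ENNReal.ofReal ((1 + ‖ξ‖) ^ (-((Q : ℝ) + Γ))) ∂μ).toReal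
  have hbound (x : EuclideanSpace ℝ (Fin Q)) (a : ℝ) (ha : 0 < a) (hxa : 1 ≤ ‖x‖ ∨ 1 ≤ a) :=
    termI_le (by linarith [Q.cast_nonneg (α := ℝ)]) hμ ha hxa
  refine ⟨⟨C, hbound⟩, (volume (ball (0 : EuclideanSpace ℝ (Fin Q)) 1)).toReal * C,
    fun α hα => ?_⟩
  have hsub : {p : EuclideanSpace ℝ (Fin Q) × ℝ |
        0 < p.2 ∧ (1 ≤ ‖p.1‖ ∨ 1 ≤ p.2) ∧ α < termI Q Γ μ p.1 p.2} ⊆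
      {p | 0 < p.2 ∧ α < C * (1 + p.2 + ‖p.1‖) ^ (-((Q : ℝ) + 1))} := by
    rintro ⟨x, a⟩ ⟨ha, hxa, hlt⟩
    refine ⟨ha, hlt.trans_le ((hbound x a ha hxa).trans ?_)⟩
    gcongr
    exact one_div_mul_rpow_div_rpow_le ha (by linarith [norm_nonneg x]) hΓ
  have hlevel := measure_superlevel_rpow_neg_le (volume : Measure (EuclideanSpace ℝ (Fin Q)))
    (by positivity : 0 ≤ C) hα
  rw [finrank_euclideanSpace_fin, ← Measure.volume_eq_prod] at hlevel
  exact (measure_mono hsub).trans hlevel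

/-- On `E = {|x| ≥ 1 or a ≥ 1}`, the term `I(x,a)` is dominated by
`C (1/a) a^Γ/(1+a+|x|)^{Q+Γ}`; in particular it belongs to weak-L¹(dx da). -/
theorem termI_estimate (Q : ℕ) (hQ : 1 ≤ Q) (Γ : ℝ) (hΓ : 1 ≤ Γ)
    (μ : Measure (EuclideanSpace ℝ (Fin Q)))
    (hμ : ∫⁻ ξ, ENNReal.ofReal ((1 + ‖ξ‖) ^ (-((Q : ℝ) + Γ))) ∂μ < ⊤) :
    (∃ C : ℝ, ∀ (x : EuclideanSpace ℝ (Fin Q)) (a : ℝ), 0 < a →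
        (1 ≤ ‖x‖ ∨ 1 ≤ a) →
        termI Q Γ μ x a ≤
          C * ((1 / a) * (a ^ Γ / (1 + a + ‖x‖) ^ ((Q : ℝ) + Γ)))) ∧
    (∃ C' : ℝ, ∀ α : ℝ, 0 < α →
        volume {p : EuclideanSpace ℝ (Fin Q) × ℝ |
            0 < p.2 ∧ (1 ≤ ‖p.1‖ ∨ 1 ≤ p.2) ∧ α < termI Q Γ μ p.1 p.2} ≤
          ENNReal.ofReal (C' / α)) :=
  termI_estimate_general Q Γ hΓ μ hμ
end
end
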